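/- arXiv:0902.2259 — 3 statements merged into one kernel-verified Lean document; each statement's English description precedes it below -/
import Mathlib

section
/- In any VN-core A, the fusion map f = (1 ⊗ μ)(δ ⊗ 1) and the map g = (1 ⊗ μ)(1 ⊗ S ⊗ 1)(δ ⊗ 1) satisfy f ∘ g ∘ f = f. -/
open TensorProduct LinearMap

/-- The fusion map `f = (1 ⊗ μ)(δ ⊗ 1) : A ⊗ A → A ⊗ A`. -/
noncomputable def fusionMap {k A : Type*} [CommRing k] [AddCommGroup A] [Module k A]
    (μ : A ⊗[k] A →ₗ[k] A) (δ : A →ₗ[k] A ⊗[k] A) : A ⊗[k] A →ₗ[k] A ⊗[k] A :=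
  lTensor A μ ∘ₗ (TensorProduct.assoc k A A A).toLinearMap ∘ₗ δ.rTensor A

/-- The map `g = (1 ⊗ μ)(1 ⊗ S ⊗ 1)(δ ⊗ 1) : A ⊗ A → A ⊗ A`. -/
noncomputable def fusionInvMap {k A : Type*} [CommRing k] [AddCommGroup A] [Module k A]
    (μ : A ⊗[k] A →ₗ[k] A) (δ : A →ₗ[k] A ⊗[k] A) (S : A →ₗ[k] A) :
    A ⊗[k] A →ₗ[k] A ⊗[k] A :=
  lTensor A μ ∘ₗ lTensor A (S.rTensor A) ∘ₗ
    (TensorProduct.assoc k A A A).toLinearMap ∘ₗ δ.rTensor A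

/-!
Both `f` and `g` have the form `F_h = (1 ⊗ μ)(h ⊗ 1)` for some `h : A → A ⊗ A`, namely `h = δ`
and `h = (1 ⊗ S)δ`. By associativity `F_h` is right `A`-linear for the action of `A` on the second
tensor factor, whence `F_h ∘ F_h' = F_{F_h ∘ h'}`. So `f g f = F_{f g δ}`, and coassociativity
together with `1 ⋆ S ⋆ 1 = 1` gives `f g δ = δ`.
-/

namespace VNCore

variable {k A : Type*} [CommRing k] [AddCommGroup A] [Module k A]

noncomputable def fusionWith (μ : A ⊗[k] A →ₗ[k] A) (h : A →ₗ[k] A ⊗[k] A) :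
    A ⊗[k] A →ₗ[k] A ⊗[k] A :=
  lTensor A μ ∘ₗ (TensorProduct.assoc k A A A).toLinearMap ∘ₗ h.rTensor A

theorem fusionMap_eq_fusionWith (μ : A ⊗[k] A →ₗ[k] A) (δ : A →ₗ[k] A ⊗[k] A) :
    fusionMap μ δ = fusionWith μ δ :=
  rfl

section Associative

variable {μ : A ⊗[k] A →ₗ[k] A}
  (hμ : μ ∘ₗ μ.rTensor A = μ ∘ₗ μ.lTensor A ∘ₗ (TensorProduct.assoc k A A A).toLinearMap)
include hμ

theorem fusionWith_comp_lTensor_mul (h : A →ₗ[k] A ⊗[k] A) :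
    fusionWith μ h ∘ₗ lTensor A μ ∘ₗ (TensorProduct.assoc k A A A).toLinearMap =
      lTensor A μ ∘ₗ (TensorProduct.assoc k A A A).toLinearMap ∘ₗ rTensor A (fusionWith μ h) := by
  have mul_assoc (a b c : A) : μ (μ (a ⊗ₜ b) ⊗ₜ c) = μ (a ⊗ₜ μ (b ⊗ₜ c)) := by
    simpa using LinearMap.congr_fun hμ ((a ⊗ₜ[k] b) ⊗ₜ[k] c)
  refine TensorProduct.ext_threefold fun x y z ↦ ?_
  simp only [fusionWith, coe_comp, Function.comp_apply, LinearEquiv.coe_coe, assoc_tmul,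
    lTensor_tmul, rTensor_tmul]
  induction h x using TensorProduct.induction_on with
  | zero => simp
  | tmul a b => simp [mul_assoc]
  | add u v hu hv => simp_all [add_tmul]

theorem fusionWith_comp (h h' : A →ₗ[k] A ⊗[k] A) :
    fusionWith μ h ∘ₗ fusionWith μ h' = fusionWith μ (fusionWith μ h ∘ₗ h') := by
  calc fusionWith μ h ∘ₗ fusionWith μ h'
      = (fusionWith μ h ∘ₗ lTensor A μ ∘ₗ (TensorProduct.assoc k A A A).toLinearMap) ∘ₗ
          h'.rTensor A := by
        simp only [fusionWith, comp_assoc]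
    _ = fusionWith μ (fusionWith μ h ∘ₗ h') := by
        rw [fusionWith_comp_lTensor_mul hμ]
        simp only [fusionWith, rTensor_comp, comp_assoc]

end Associative

theorem fusionInvMap_eq_fusionWith (μ : A ⊗[k] A →ₗ[k] A) (δ : A →ₗ[k] A ⊗[k] A)
    (S : A →ₗ[k] A) : fusionInvMap μ δ S = fusionWith μ (lTensor A S ∘ₗ δ) := by
  simp only [fusionInvMap, fusionWith, rTensor_comp]
  rw [← comp_assoc (rTensor A δ) _ (lTensor A (rTensor A S)), lTensor_rTensor_comp_assoc]
  simp only [comp_assoc]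

section Coassociative

variable {δ : A →ₗ[k] A ⊗[k] A}
  (hδ : (TensorProduct.assoc k A A A).toLinearMap ∘ₗ δ.rTensor A ∘ₗ δ = δ.lTensor A ∘ₗ δ)
include hδ

theorem assoc_comp_rTensor_comp_lTensor_comp_comul (φ : A →ₗ[k] A) :
    (TensorProduct.assoc k A A A).toLinearMap ∘ₗ δ.rTensor A ∘ₗ φ.lTensor A ∘ₗ δ =
      lTensor A (φ.lTensor A ∘ₗ δ) ∘ₗ δ := by
  have assoc_lTensor : (TensorProduct.assoc k A A A).toLinearMap ∘ₗ lTensor (A ⊗[k] A) φ =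
      lTensor A (lTensor A φ) ∘ₗ (TensorProduct.assoc k A A A).toLinearMap :=
    TensorProduct.ext_threefold fun _ _ _ ↦ rfl
  calc (TensorProduct.assoc k A A A).toLinearMap ∘ₗ δ.rTensor A ∘ₗ φ.lTensor A ∘ₗ δ
      = ((TensorProduct.assoc k A A A).toLinearMap ∘ₗ lTensor (A ⊗[k] A) φ) ∘ₗ
          δ.rTensor A ∘ₗ δ := by
        rw [← comp_assoc δ (φ.lTensor A), rTensor_comp_lTensor, ← lTensor_comp_rTensor]
        simp only [comp_assoc]
    _ = lTensor A (φ.lTensor A ∘ₗ δ) ∘ₗ δ := by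
        rw [assoc_lTensor, comp_assoc, hδ, lTensor_comp, comp_assoc]

theorem fusionMap_comp_lTensor_comp_comul (μ : A ⊗[k] A →ₗ[k] A) (φ : A →ₗ[k] A) :
    fusionMap μ δ ∘ₗ φ.lTensor A ∘ₗ δ = lTensor A (μ ∘ₗ φ.lTensor A ∘ₗ δ) ∘ₗ δ := by
  simp only [fusionMap, comp_assoc, assoc_comp_rTensor_comp_lTensor_comp_comul hδ, lTensor_comp]

theorem fusionInvMap_comp_comul (μ : A ⊗[k] A →ₗ[k] A) (S : A →ₗ[k] A) :
    fusionInvMap μ δ S ∘ₗ δ = lTensor A (μ ∘ₗ S.rTensor A ∘ₗ δ) ∘ₗ δ := by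
  simp only [fusionInvMap, comp_assoc, hδ, lTensor_comp]

theorem fusionMap_comp_fusionInvMap_comp_comul {μ : A ⊗[k] A →ₗ[k] A} {S : A →ₗ[k] A}
    (hS : μ ∘ₗ lTensor A μ ∘ₗ lTensor A (S.rTensor A) ∘ₗ lTensor A δ ∘ₗ δ = LinearMap.id) :
    fusionMap μ δ ∘ₗ fusionInvMap μ δ S ∘ₗ δ = δ := by
  rw [fusionInvMap_comp_comul hδ, fusionMap_comp_lTensor_comp_comul hδ]
  have convolution_eq_id : μ ∘ₗ lTensor A (μ ∘ₗ S.rTensor A ∘ₗ δ) ∘ₗ δ = LinearMap.id := by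
    rw [← hS]
    simp only [lTensor_comp, comp_assoc]
  rw [convolution_eq_id, lTensor_id, id_comp]

end Coassociative

end VNCore

open VNCore in
theorem fusion_fgf_general {k A : Type*} [CommRing k] [AddCommGroup A] [Module k A]
    (μ : A ⊗[k] A →ₗ[k] A) (δ : A →ₗ[k] A ⊗[k] A) (S : A →ₗ[k] A)
    -- associativity of μ
    (hμ : μ ∘ₗ μ.rTensor A =
      μ ∘ₗ μ.lTensor A ∘ₗ (TensorProduct.assoc k A A A).toLinearMap)
    -- coassociativity of δ
    (hδ : (TensorProduct.assoc k A A A).toLinearMap ∘ₗ δ.rTensor A ∘ₗ δ =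
      δ.lTensor A ∘ₗ δ)
    -- VN-core axiom: μ₃(1 ⊗ S ⊗ 1)δ₃ = 1
    (hS : μ ∘ₗ lTensor A μ ∘ₗ lTensor A (S.rTensor A) ∘ₗ lTensor A δ ∘ₗ δ =
      LinearMap.id) :
    fusionMap μ δ ∘ₗ fusionInvMap μ δ S ∘ₗ fusionMap μ δ = fusionMap μ δ := by
  calc fusionMap μ δ ∘ₗ fusionInvMap μ δ S ∘ₗ fusionMap μ δ
      = fusionWith μ (fusionMap μ δ ∘ₗ fusionInvMap μ δ S ∘ₗ δ) := by
        rw [fusionInvMap_eq_fusionWith, fusionMap_eq_fusionWith, fusionWith_comp hμ,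
          fusionWith_comp hμ]
    _ = fusionMap μ δ := by
        rw [fusionMap_comp_fusionInvMap_comp_comul hδ hS, fusionMap_eq_fusionWith]

/-- in any VN-core, `f ∘ g ∘ f = f`. -/
theorem fusion_fgf {k A : Type*} [CommRing k] [AddCommGroup A] [Module k A]
    (μ : A ⊗[k] A →ₗ[k] A) (δ : A →ₗ[k] A ⊗[k] A) (S : A →ₗ[k] A)
    -- associativity of μ
    (hμ : μ ∘ₗ μ.rTensor A =
      μ ∘ₗ μ.lTensor A ∘ₗ (TensorProduct.assoc k A A A).toLinearMap)
    -- coassociativity of δ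
    (hδ : (TensorProduct.assoc k A A A).toLinearMap ∘ₗ δ.rTensor A ∘ₗ δ =
      δ.lTensor A ∘ₗ δ)
    -- semibialgebra axiom: δμ = (μ ⊗ μ)(1 ⊗ c ⊗ 1)(δ ⊗ δ)
    (hsb : δ ∘ₗ μ = TensorProduct.map μ μ ∘ₗ
      (TensorProduct.tensorTensorTensorComm k A A A A).toLinearMap ∘ₗ
      TensorProduct.map δ δ)
    -- VN-core axiom: μ₃(1 ⊗ S ⊗ 1)δ₃ = 1
    (hS : μ ∘ₗ lTensor A μ ∘ₗ lTensor A (S.rTensor A) ∘ₗ lTensor A δ ∘ₗ δ =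
      LinearMap.id) :
    fusionMap μ δ ∘ₗ fusionInvMap μ δ S ∘ₗ fusionMap μ δ = fusionMap μ δ :=
  fusion_fgf_general μ δ S hμ hδ hS
end

section
/- In a unital VN-core, g ∘ f = 1 on A ⊗ A, where f = (1 ⊗ μ)(δ ⊗ 1) and g = (1 ⊗ μ)(1 ⊗ S ⊗ 1)(δ ⊗ 1). -/
open TensorProduct LinearMap

/-- in a unital VN-core, `g ∘ f = 1` on `A ⊗ A`. -/
theorem unital_vncore_gf {k A : Type*} [CommRing k] [AddCommGroup A] [Module k A]
    (μ : A ⊗[k] A →ₗ[k] A) (δ : A →ₗ[k] A ⊗[k] A) (S : A →ₗ[k] A) (η : k →ₗ[k] A)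
    -- associativity of μ
    (hμ : μ ∘ₗ μ.rTensor A =
      μ ∘ₗ μ.lTensor A ∘ₗ (TensorProduct.assoc k A A A).toLinearMap)
    -- unit axioms
    (hηl : μ ∘ₗ η.rTensor A ∘ₗ (TensorProduct.lid k A).symm.toLinearMap = LinearMap.id)
    (hηr : μ ∘ₗ η.lTensor A ∘ₗ (TensorProduct.rid k A).symm.toLinearMap = LinearMap.id)
    -- coassociativity of δ
    (hδ : (TensorProduct.assoc k A A A).toLinearMap ∘ₗ δ.rTensor A ∘ₗ δ =
      δ.lTensor A ∘ₗ δ)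
    -- semibialgebra axiom
    (hsb : δ ∘ₗ μ = TensorProduct.map μ μ ∘ₗ
      (TensorProduct.tensorTensorTensorComm k A A A A).toLinearMap ∘ₗ
      TensorProduct.map δ δ)
    -- unital VN-core axiom: (1 ⊗ μ)(1 ⊗ S ⊗ 1)δ₃ = 1 ⊗ η
    (hS : lTensor A μ ∘ₗ lTensor A (S.rTensor A) ∘ₗ
        (TensorProduct.assoc k A A A).toLinearMap ∘ₗ δ.rTensor A ∘ₗ δ =
      η.lTensor A ∘ₗ (TensorProduct.rid k A).symm.toLinearMap) :
    fusionInvMap μ δ S ∘ₗ fusionMap μ δ = LinearMap.id := by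
  unfold fusionInvMap fusionMap
  have hA : (δ.rTensor A) ∘ₗ lTensor A μ
      = lTensor (A ⊗[k] A) μ ∘ₗ δ.rTensor (A ⊗[k] A) := by
    ext a b c; simp
  have hB : (TensorProduct.assoc k A A A).toLinearMap ∘ₗ lTensor (A ⊗[k] A) μ
      = lTensor A (lTensor A μ) ∘ₗ (TensorProduct.assoc k A A (A ⊗[k] A)).toLinearMap := by
    ext a b c d; simp
  have hC : (TensorProduct.assoc k A A (A ⊗[k] A)).toLinearMap ∘ₗ δ.rTensor (A ⊗[k] A)
        ∘ₗ (TensorProduct.assoc k A A A).toLinearMap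
      = (TensorProduct.assoc k A A (A ⊗[k] A)).toLinearMap
        ∘ₗ (TensorProduct.assoc k (A ⊗[k] A) A A).toLinearMap
        ∘ₗ (δ.rTensor A).rTensor A := by
    ext a b c; simp
  have hΨ : lTensor A μ ∘ₗ lTensor A (S.rTensor A) ∘ₗ lTensor A (lTensor A μ)
        ∘ₗ (TensorProduct.assoc k A A (A ⊗[k] A)).toLinearMap
        ∘ₗ (TensorProduct.assoc k (A ⊗[k] A) A A).toLinearMap
      = lTensor A μ ∘ₗ (TensorProduct.assoc k A A A).toLinearMap
        ∘ₗ (lTensor A μ ∘ₗ lTensor A (S.rTensor A)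
            ∘ₗ (TensorProduct.assoc k A A A).toLinearMap).rTensor A := by
    ext a b c d
    simp
    congr 1
    have h := LinearMap.congr_fun hμ ((S b ⊗ₜ[k] c) ⊗ₜ[k] d)
    simpa using h.symm
  ext a b
  simp only [TensorProduct.AlgebraTensorModule.curry_apply, curry_apply,
    LinearMap.coe_restrictScalars, coe_comp, Function.comp_apply, id_coe, id_eq,
    rTensor_tmul]
  have hA' : ∀ y : A ⊗[k] (A ⊗[k] A),
      (LinearMap.rTensor A δ) ((LinearMap.lTensor A μ) y)
        = (LinearMap.lTensor (A ⊗[k] A) μ) ((LinearMap.rTensor (A ⊗[k] A) δ) y) :=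
    fun y => LinearMap.congr_fun hA y
  have hB' : ∀ y : (A ⊗[k] A) ⊗[k] (A ⊗[k] A),
      (TensorProduct.assoc k A A A) ((LinearMap.lTensor (A ⊗[k] A) μ) y)
        = (LinearMap.lTensor A (LinearMap.lTensor A μ))
            ((TensorProduct.assoc k A A (A ⊗[k] A)) y) :=
    fun y => by simpa using LinearMap.congr_fun hB y
  have hC' : ∀ y : (A ⊗[k] A) ⊗[k] A,
      (TensorProduct.assoc k A A (A ⊗[k] A))
          ((LinearMap.rTensor (A ⊗[k] A) δ) ((TensorProduct.assoc k A A A) y))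
        = (TensorProduct.assoc k A A (A ⊗[k] A))
            ((TensorProduct.assoc k (A ⊗[k] A) A A)
              ((LinearMap.rTensor A (LinearMap.rTensor A δ)) y)) :=
    fun y => by simpa using LinearMap.congr_fun hC y
  have hΨ' : ∀ y : ((A ⊗[k] A) ⊗[k] A) ⊗[k] A,
      (LinearMap.lTensor A μ) ((LinearMap.lTensor A (LinearMap.rTensor A S))
        ((LinearMap.lTensor A (LinearMap.lTensor A μ))
          ((TensorProduct.assoc k A A (A ⊗[k] A))
            ((TensorProduct.assoc k (A ⊗[k] A) A A) y))))
        = (LinearMap.lTensor A μ) ((TensorProduct.assoc k A A A)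
            ((LinearMap.rTensor A (LinearMap.lTensor A μ ∘ₗ
                LinearMap.lTensor A (LinearMap.rTensor A S) ∘ₗ
                (TensorProduct.assoc k A A A).toLinearMap)) y)) :=
    fun y => by simpa using LinearMap.congr_fun hΨ y
  have hS' : ∀ x : A,
      (LinearMap.lTensor A μ) ((LinearMap.lTensor A (LinearMap.rTensor A S))
        ((TensorProduct.assoc k A A A) ((LinearMap.rTensor A δ) (δ x))))
        = x ⊗ₜ[k] η 1 :=
    fun x => by simpa using LinearMap.congr_fun hS x
  have hηl' : ∀ x : A, μ (η 1 ⊗ₜ[k] x) = x :=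
    fun x => by simpa using LinearMap.congr_fun hηl x
  simp only [LinearEquiv.coe_coe]
  rw [hA', hB', hC', rTensor_tmul, hΨ', rTensor_tmul]
  simp only [coe_comp, Function.comp_apply, LinearEquiv.coe_coe]
  rw [hS']
  simp [hηl']
end

section
/- The fusion map f = (1 ⊗ μ)(δ ⊗ 1) of a semibialgebra satisfies the fusion (pentagon) equation f₁₂ f₁₃ f₂₃ = f₂₃ f₁₂ on A ⊗ A ⊗ A. -/
open TensorProduct LinearMap

/-- For `h : A ⊗ A → A ⊗ A`, the map `h₂₃ = 1 ⊗ h` on `(A ⊗ A) ⊗ A`. -/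
noncomputable def leg23 {k A : Type*} [CommRing k] [AddCommGroup A] [Module k A]
    (h : A ⊗[k] A →ₗ[k] A ⊗[k] A) : (A ⊗[k] A) ⊗[k] A →ₗ[k] (A ⊗[k] A) ⊗[k] A :=
  (TensorProduct.assoc k A A A).symm.toLinearMap ∘ₗ lTensor A h ∘ₗ
    (TensorProduct.assoc k A A A).toLinearMap

/-- The swap of the second and third tensor factors of `(A ⊗ A) ⊗ A`. -/
noncomputable def swap23 {k A : Type*} [CommRing k] [AddCommGroup A] [Module k A] :
    (A ⊗[k] A) ⊗[k] A →ₗ[k] (A ⊗[k] A) ⊗[k] A :=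
  (TensorProduct.assoc k A A A).symm.toLinearMap ∘ₗ
    lTensor A (TensorProduct.comm k A A).toLinearMap ∘ₗ
    (TensorProduct.assoc k A A A).toLinearMap

/-- the fusion map of a semibialgebra satisfies the fusion
(pentagon) equation `f₁₂ f₁₃ f₂₃ = f₂₃ f₁₂` on `A ⊗ A ⊗ A`. -/
theorem fusion_pentagon {k A : Type*} [CommRing k] [AddCommGroup A] [Module k A]
    (μ : A ⊗[k] A →ₗ[k] A) (δ : A →ₗ[k] A ⊗[k] A)
    (hμ : μ ∘ₗ μ.rTensor A =
      μ ∘ₗ μ.lTensor A ∘ₗ (TensorProduct.assoc k A A A).toLinearMap)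
    (hδ : (TensorProduct.assoc k A A A).toLinearMap ∘ₗ δ.rTensor A ∘ₗ δ =
      δ.lTensor A ∘ₗ δ)
    (hsb : δ ∘ₗ μ = TensorProduct.map μ μ ∘ₗ
      (TensorProduct.tensorTensorTensorComm k A A A A).toLinearMap ∘ₗ
      TensorProduct.map δ δ) :
    (fusionMap μ δ).rTensor A ∘ₗ
        (swap23 ∘ₗ (fusionMap μ δ).rTensor A ∘ₗ swap23) ∘ₗ
        leg23 (fusionMap μ δ) =
      leg23 (fusionMap μ δ) ∘ₗ (fusionMap μ δ).rTensor A := by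
  have hμ' : ∀ x : (A ⊗[k] A) ⊗[k] A, μ (μ.rTensor A x) =
      μ (μ.lTensor A ((TensorProduct.assoc k A A A) x)) := fun x =>
    LinearMap.congr_fun hμ x
  have hδ' : ∀ a : A, (TensorProduct.assoc k A A A) (δ.rTensor A (δ a)) =
      δ.lTensor A (δ a) := fun a => LinearMap.congr_fun hδ a
  have hsb' : ∀ x : A ⊗[k] A, δ (μ x) = TensorProduct.map μ μ
      ((TensorProduct.tensorTensorTensorComm k A A A A)
        (TensorProduct.map δ δ x)) := fun x => LinearMap.congr_fun hsb x
  apply TensorProduct.ext_threefold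
  intro a b c
  set f := fusionMap μ δ with hf
  let g : A →ₗ[k] A := μ ∘ₗ (TensorProduct.mk k A A).flip c
  let W : (A ⊗[k] (A ⊗[k] A)) ⊗[k] (A ⊗[k] A) →ₗ[k] (A ⊗[k] A) ⊗[k] A :=
    TensorProduct.map (lTensor A μ) (g ∘ₗ μ) ∘ₗ
      (TensorProduct.assoc k A (A ⊗[k] A) (A ⊗[k] A)).symm.toLinearMap ∘ₗ
      lTensor A (TensorProduct.tensorTensorTensorComm k A A A A).toLinearMap ∘ₗ
      (TensorProduct.assoc k A (A ⊗[k] A) (A ⊗[k] A)).toLinearMap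
  have hW : ∀ (x y z u v : A), W ((x ⊗ₜ (y ⊗ₜ z)) ⊗ₜ (u ⊗ₜ v)) =
      (x ⊗ₜ μ (y ⊗ₜ u)) ⊗ₜ μ (μ (z ⊗ₜ v) ⊗ₜ c) := by
    intro x y z u v
    simp [W, g, tensorTensorTensorComm_tmul]
  -- left side
  have hL : (f.rTensor A ∘ₗ (swap23 ∘ₗ f.rTensor A ∘ₗ swap23) ∘ₗ leg23 f)
      ((a ⊗ₜ b) ⊗ₜ c)
      = W (((TensorProduct.assoc k A A A) (δ.rTensor A (δ a))) ⊗ₜ δ b) := by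
    simp only [comp_apply, leg23, swap23, hf, fusionMap, LinearEquiv.coe_coe,
      assoc_tmul, lTensor_tmul, rTensor_tmul, assoc_symm_tmul, comm_tmul]
    generalize δ b = s
    induction s using TensorProduct.induction_on with
    | zero => simp
    | add p q hp hq =>
        simp only [tmul_add, add_tmul, map_add, hp, hq]
    | tmul u v =>
      simp only [comp_apply, LinearEquiv.coe_coe, assoc_tmul, lTensor_tmul,
        rTensor_tmul, assoc_symm_tmul, comm_tmul]
      generalize δ a = t
      induction t using TensorProduct.induction_on with
      | zero => simp
      | add p q hp hq =>
          simp only [tmul_add, add_tmul, map_add, hp, hq]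
      | tmul x y =>
        simp only [comp_apply, LinearEquiv.coe_coe, assoc_tmul, lTensor_tmul,
          rTensor_tmul, assoc_symm_tmul, comm_tmul]
        generalize δ x = r
        induction r using TensorProduct.induction_on with
        | zero => simp
        | add p q hp hq => simp only [tmul_add, add_tmul, map_add, hp, hq]
        | tmul p q =>
          have h1 := hμ' ((y ⊗ₜ[k] v) ⊗ₜ[k] c)
          simp only [rTensor_tmul, lTensor_tmul, assoc_tmul, LinearEquiv.coe_coe] at h1
          simp only [assoc_tmul, lTensor_tmul, hW, h1]
  have hR : (leg23 f ∘ₗ f.rTensor A) ((a ⊗ₜ b) ⊗ₜ c)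
      = W ((δ.lTensor A (δ a)) ⊗ₜ δ b) := by
    simp only [comp_apply, leg23, hf, fusionMap, LinearEquiv.coe_coe,
      assoc_tmul, lTensor_tmul, rTensor_tmul, assoc_symm_tmul]
    generalize δ a = t
    induction t using TensorProduct.induction_on with
    | zero => simp
    | add p q hp hq => simp only [tmul_add, add_tmul, map_add, hp, hq]
    | tmul x y =>
      simp only [comp_apply, LinearEquiv.coe_coe, assoc_tmul, lTensor_tmul,
        rTensor_tmul, assoc_symm_tmul, hsb' (y ⊗ₜ[k] b), map_tmul]
      generalize δ y = r
      induction r using TensorProduct.induction_on with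
      | zero => simp
      | add p q hp hq => simp only [tmul_add, add_tmul, map_add, hp, hq]
      | tmul p q =>
        generalize δ b = s
        induction s using TensorProduct.induction_on with
        | zero => simp
        | add p' q' hp hq => simp only [tmul_add, add_tmul, map_add, hp, hq]
        | tmul u v =>
          simp only [tensorTensorTensorComm_tmul, map_tmul, assoc_tmul,
            lTensor_tmul, assoc_symm_tmul, LinearEquiv.coe_coe, hW]
  calc (f.rTensor A ∘ₗ (swap23 ∘ₗ f.rTensor A ∘ₗ swap23) ∘ₗ leg23 f) ((a ⊗ₜ b) ⊗ₜ c)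
      = W (((TensorProduct.assoc k A A A) (δ.rTensor A (δ a))) ⊗ₜ δ b) := hL
    _ = W ((δ.lTensor A (δ a)) ⊗ₜ δ b) := by rw [hδ' a]
    _ = (leg23 f ∘ₗ f.rTensor A) ((a ⊗ₜ b) ⊗ₜ c) := hR.symm
end
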